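/- arXiv:2107.11464 — 2 statements merged into one kernel-verified Lean document; each statement's English description precedes it below -/
import Mathlib

section
/- If A is a four-index tensor with finite Hilbert-Schmidt norm, then the tensor T defined by contracting four copies of A in a 2×2 plaquette satisfies ‖T‖ ≤ ‖A‖⁴. -/
/-- Hilbert-Schmidt (Frobenius) norm of a tensor indexed by `ι`. -/
noncomputable def hsNorm {ι : Type*} (A : ι → ℝ) : ℝ :=
  Real.sqrt (∑' x, (A x) ^ 2)

/-- The 2×2 plaquette contraction of four copies of a four-index tensor `A`:
`T_{(i₁i₂)(j₁j₂)(k₁k₂)(l₁l₂) } = ∑_{a,b,c,d} A_{i₁j₁ad} A_{aj₂k₁c} A_{bck₂l₁} A_{i₂bdl₂}`. -/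
noncomputable def contract2x2 (A : ℕ × ℕ × ℕ × ℕ → ℝ) :
    ((ℕ × ℕ) × (ℕ × ℕ) × (ℕ × ℕ) × (ℕ × ℕ)) → ℝ := fun q =>
  ∑' w : ℕ × ℕ × ℕ × ℕ,
    A (q.1.1, q.2.1.1, w.1, w.2.2.2) * A (w.1, q.2.1.2, q.2.2.1.1, w.2.2.1) *
      A (w.2.1, w.2.2.1, q.2.2.1.2, q.2.2.2.1) * A (q.1.2, w.2.1, w.2.2.2, q.2.2.2.2)


/-!
Fix the eight outer indices and view the four factors as matrices in their internal bonds: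
`X a d`, `Y a c`, `Z b c`, `W b d`. The entry of `T` is then `∑_{a,b} (Y Zᵀ)_{ab} (X Wᵀ)_{ab}`,
so Cauchy–Schwarz and submultiplicativity of the Frobenius norm bound it by `‖X‖ ‖Y‖ ‖Z‖ ‖W‖`,
the Hilbert–Schmidt norms of four slices of `A`. Each slice is indexed by its own pair of outer
indices, so the sum over all outer indices of the squared bound factors into four sums, each of
which is `‖A‖²`. For infinite bond ranges the same bound holds for every finite partial sum of
the absolute values, which gives absolute summability of the contraction along the way.
-/

open Finset

section HilbertSchmidt

variable {ι κ α β : Type*}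

lemma hsNorm_sq (f : ι → ℝ) : hsNorm f ^ 2 = ∑' x, f x ^ 2 :=
  Real.sq_sqrt (tsum_nonneg fun _ => sq_nonneg _)

lemma hsNorm_comp_equiv (f : ι → ℝ) (e : κ ≃ ι) : hsNorm (f ∘ e) = hsNorm f :=
  congrArg Real.sqrt (e.tsum_eq fun x => f x ^ 2)

lemma hsNorm_le_of_abs_le {f g : ι → ℝ} (hg : Summable fun x => g x ^ 2)
    (h : ∀ x, |f x| ≤ g x) : hsNorm f ≤ hsNorm g := by
  have hsq (x : ι) : f x ^ 2 ≤ g x ^ 2 := sq_abs (f x) ▸ pow_le_pow_left₀ (abs_nonneg _) (h x) 2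
  have hf : Summable fun x => f x ^ 2 := Summable.of_nonneg_of_le (fun _ => sq_nonneg _) hsq hg
  exact Real.sqrt_le_sqrt (hf.tsum_le_tsum hsq hg)

def outerProd (f : α → ℝ) (g : β → ℝ) : α × β → ℝ := fun p => f p.1 * g p.2

lemma summable_sq_outerProd {f : α → ℝ} {g : β → ℝ} (hf : Summable fun a => f a ^ 2)
    (hg : Summable fun b => g b ^ 2) : Summable fun p => outerProd f g p ^ 2 := by
  simpa only [outerProd, mul_pow] using
    hf.mul_of_nonneg hg (fun _ => sq_nonneg _) (fun _ => sq_nonneg _)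

lemma hsNorm_outerProd {f : α → ℝ} {g : β → ℝ} (hf : Summable fun a => f a ^ 2)
    (hg : Summable fun b => g b ^ 2) : hsNorm (outerProd f g) = hsNorm f * hsNorm g := by
  have hprod := tsum_mul_tsum_of_summable_norm (f := fun a => f a ^ 2) (g := fun b => g b ^ 2)
    (by simpa only [Real.norm_eq_abs] using hf.abs) (by simpa only [Real.norm_eq_abs] using hg.abs)
  rw [hsNorm, hsNorm, hsNorm, ← Real.sqrt_mul (tsum_nonneg fun _ => sq_nonneg _), hprod]
  simp only [outerProd, mul_pow]

noncomputable def sliceNorm (f : α × β → ℝ) (a : α) : ℝ := hsNorm fun b => f (a, b)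

lemma summable_sq_sliceNorm {f : α × β → ℝ} (hf : Summable fun p => f p ^ 2) :
    Summable fun a => sliceNorm f a ^ 2 := by
  simpa only [sliceNorm, hsNorm_sq] using hf.prod

lemma hsNorm_sliceNorm {f : α × β → ℝ} (hf : Summable fun p => f p ^ 2) :
    hsNorm (sliceNorm f) = hsNorm f := by
  rw [hsNorm, hsNorm, hf.tsum_prod]
  simp only [sliceNorm, hsNorm_sq]

lemma summable_sq_sliceNorm_comp {A : ι → ℝ} (hA : Summable fun x => A x ^ 2) (e : α × β ≃ ι) :
    Summable fun a => sliceNorm (A ∘ e) a ^ 2 :=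
  summable_sq_sliceNorm ((e.summable_iff (f := fun x => A x ^ 2)).2 hA)

lemma hsNorm_sliceNorm_comp {A : ι → ℝ} (hA : Summable fun x => A x ^ 2) (e : α × β ≃ ι) :
    hsNorm (sliceNorm (A ∘ e)) = hsNorm A :=
  (hsNorm_sliceNorm ((e.summable_iff (f := fun x => A x ^ 2)).2 hA)).trans (hsNorm_comp_equiv A e)

end HilbertSchmidt

section Plaquette

variable {α β γ δ : Type*}

lemma sum_sq_sum_mul_le (s : Finset α) (t : Finset β) (u : Finset γ)
    (Y : α → γ → ℝ) (Z : β → γ → ℝ) :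
    ∑ p ∈ s ×ˢ t, (∑ c ∈ u, Y p.1 c * Z p.2 c) ^ 2 ≤
      (∑ a ∈ s, ∑ c ∈ u, Y a c ^ 2) * ∑ b ∈ t, ∑ c ∈ u, Z b c ^ 2 := by
  rw [sum_product, sum_mul_sum]
  exact sum_le_sum fun a _ => sum_le_sum fun b _ => sum_mul_sq_le_sq_mul_sq u _ _

lemma sum_plaquette_le (sa : Finset α) (sb : Finset β) (sc : Finset γ) (sd : Finset δ)
    (X : α → δ → ℝ) (Y : α → γ → ℝ) (Z : β → γ → ℝ) (W : β → δ → ℝ) :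
    ∑ a ∈ sa, ∑ b ∈ sb, ∑ c ∈ sc, ∑ d ∈ sd, X a d * Y a c * Z b c * W b d ≤
      √(∑ a ∈ sa, ∑ d ∈ sd, X a d ^ 2) * √(∑ a ∈ sa, ∑ c ∈ sc, Y a c ^ 2) *
        √(∑ b ∈ sb, ∑ c ∈ sc, Z b c ^ 2) * √(∑ b ∈ sb, ∑ d ∈ sd, W b d ^ 2) := by
  have hsplit : ∑ a ∈ sa, ∑ b ∈ sb, ∑ c ∈ sc, ∑ d ∈ sd, X a d * Y a c * Z b c * W b d =
      ∑ p ∈ sa ×ˢ sb, (∑ c ∈ sc, Y p.1 c * Z p.2 c) * ∑ d ∈ sd, X p.1 d * W p.2 d := by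
    rw [sum_product]
    refine sum_congr rfl fun a _ => sum_congr rfl fun b _ => ?_
    rw [sum_mul_sum]
    exact sum_congr rfl fun c _ => sum_congr rfl fun d _ => by ring
  calc _ = _ := hsplit
    _ ≤ √(∑ p ∈ sa ×ˢ sb, (∑ c ∈ sc, Y p.1 c * Z p.2 c) ^ 2) *
          √(∑ p ∈ sa ×ˢ sb, (∑ d ∈ sd, X p.1 d * W p.2 d) ^ 2) :=
        Real.sum_mul_le_sqrt_mul_sqrt _ _ _
    _ ≤ √((∑ a ∈ sa, ∑ c ∈ sc, Y a c ^ 2) * ∑ b ∈ sb, ∑ c ∈ sc, Z b c ^ 2) *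
          √((∑ a ∈ sa, ∑ d ∈ sd, X a d ^ 2) * ∑ b ∈ sb, ∑ d ∈ sd, W b d ^ 2) := by
        gcongr <;> exact sum_sq_sum_mul_le _ _ _ _ _
    _ = _ := by
        rw [Real.sqrt_mul (by positivity), Real.sqrt_mul (by positivity)]
        ring

lemma sum_sum_sq_le_tsum {X : α → δ → ℝ} (hX : Summable fun p : α × δ => X p.1 p.2 ^ 2)
    (s : Finset α) (t : Finset δ) :
    ∑ a ∈ s, ∑ d ∈ t, X a d ^ 2 ≤ ∑' p : α × δ, X p.1 p.2 ^ 2 := by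
  rw [← sum_product' s t fun a d => X a d ^ 2]
  exact hX.sum_le_tsum (s ×ˢ t) fun _ _ => sq_nonneg _

lemma abs_tsum_plaquette_le {X : α → δ → ℝ} {Y : α → γ → ℝ} {Z : β → γ → ℝ} {W : β → δ → ℝ}
    (hX : Summable fun p : α × δ => X p.1 p.2 ^ 2) (hY : Summable fun p : α × γ => Y p.1 p.2 ^ 2)
    (hZ : Summable fun p : β × γ => Z p.1 p.2 ^ 2) (hW : Summable fun p : β × δ => W p.1 p.2 ^ 2) :
    |∑' w : α × β × γ × δ, X w.1 w.2.2.2 * Y w.1 w.2.2.1 * Z w.2.1 w.2.2.1 * W w.2.1 w.2.2.2| ≤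
      (hsNorm fun p : α × δ => X p.1 p.2) * (hsNorm fun p : α × γ => Y p.1 p.2) *
        (hsNorm fun p : β × γ => Z p.1 p.2) * hsNorm fun p : β × δ => W p.1 p.2 := by
  classical
  set f : α × β × γ × δ → ℝ := fun w =>
    X w.1 w.2.2.2 * Y w.1 w.2.2.1 * Z w.2.1 w.2.2.1 * W w.2.1 w.2.2.2
  have hpartial : ∀ s : Finset (α × β × γ × δ), ∑ w ∈ s, |f w| ≤
      (hsNorm fun p : α × δ => X p.1 p.2) * (hsNorm fun p : α × γ => Y p.1 p.2) *
        (hsNorm fun p : β × γ => Z p.1 p.2) * hsNorm fun p : β × δ => W p.1 p.2 := by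
    intro s
    have hbox : s ⊆ s.image (·.1) ×ˢ s.image (·.2.1) ×ˢ s.image (·.2.2.1) ×ˢ s.image (·.2.2.2) :=
      fun w hw => by
        simp only [mem_product, mem_image]
        exact ⟨⟨w, hw, rfl⟩, ⟨w, hw, rfl⟩, ⟨w, hw, rfl⟩, ⟨w, hw, rfl⟩⟩
    refine (sum_le_sum_of_subset_of_nonneg hbox fun _ _ _ => abs_nonneg _).trans ?_
    simp only [sum_product, f, abs_mul]
    refine (sum_plaquette_le _ _ _ _ (fun a d => |X a d|) (fun a c => |Y a c|)
      (fun b c => |Z b c|) (fun b d => |W b d|)).trans ?_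
    simp only [sq_abs, hsNorm]
    gcongr
    exacts [sum_sum_sq_le_tsum hX _ _, sum_sum_sq_le_tsum hY _ _, sum_sum_sq_le_tsum hZ _ _,
      sum_sum_sq_le_tsum hW _ _]
  have hsum : Summable fun w => |f w| := summable_of_sum_le (fun _ => abs_nonneg _) hpartial
  calc |∑' w, f w| ≤ ∑' w, |f w| := by
        simpa only [Real.norm_eq_abs] using
          norm_tsum_le_tsum_norm (f := f) (by simpa only [Real.norm_eq_abs] using hsum)
    _ ≤ _ := hsum.tsum_le_of_sum_le hpartial

end Plaquette

section Contract2x2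

-- `fixIJEquiv` places the first (fixed) pair at positions `I`, `J` of an index of `A`
-- and the second (free) pair at the two remaining positions, in order.
def fix12Equiv : (ℕ × ℕ) × (ℕ × ℕ) ≃ ℕ × ℕ × ℕ × ℕ where
  toFun p := (p.1.1, p.1.2, p.2.1, p.2.2)
  invFun w := ((w.1, w.2.1), (w.2.2.1, w.2.2.2))
  left_inv _ := rfl
  right_inv _ := rfl

def fix23Equiv : (ℕ × ℕ) × (ℕ × ℕ) ≃ ℕ × ℕ × ℕ × ℕ where
  toFun p := (p.2.1, p.1.1, p.1.2, p.2.2)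
  invFun w := ((w.2.1, w.2.2.1), (w.1, w.2.2.2))
  left_inv _ := rfl
  right_inv _ := rfl

def fix34Equiv : (ℕ × ℕ) × (ℕ × ℕ) ≃ ℕ × ℕ × ℕ × ℕ where
  toFun p := (p.2.1, p.2.2, p.1.1, p.1.2)
  invFun w := ((w.2.2.1, w.2.2.2), (w.1, w.2.1))
  left_inv _ := rfl
  right_inv _ := rfl

def fix14Equiv : (ℕ × ℕ) × (ℕ × ℕ) ≃ ℕ × ℕ × ℕ × ℕ where
  toFun p := (p.1.1, p.2.1, p.2.2, p.1.2)
  invFun w := ((w.1, w.2.2.2), (w.2.1, w.2.2.1))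
  left_inv _ := rfl
  right_inv _ := rfl

-- `((i₁,i₂),(j₁,j₂),(k₁,k₂),(l₁,l₂)) ↦ ((i₁,j₁),(j₂,k₁),(k₂,l₁),(i₂,l₂))`: the outer indices
-- carried by each of the four tensors of the plaquette.
def plaquetteRegroup :
    (ℕ × ℕ) × (ℕ × ℕ) × (ℕ × ℕ) × (ℕ × ℕ) ≃ (ℕ × ℕ) × (ℕ × ℕ) × (ℕ × ℕ) × (ℕ × ℕ) where
  toFun q := ((q.1.1, q.2.1.1), (q.2.1.2, q.2.2.1.1), (q.2.2.1.2, q.2.2.2.1), (q.1.2, q.2.2.2.2))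
  invFun r := ((r.1.1, r.2.2.2.1), (r.1.2, r.2.1.1), (r.2.1.2, r.2.2.1.1), (r.2.2.1.2, r.2.2.2.2))
  left_inv _ := rfl
  right_inv _ := rfl

noncomputable def plaquetteBound (A : ℕ × ℕ × ℕ × ℕ → ℝ) :
    (ℕ × ℕ) × (ℕ × ℕ) × (ℕ × ℕ) × (ℕ × ℕ) → ℝ :=
  outerProd (sliceNorm (A ∘ fix12Equiv)) (outerProd (sliceNorm (A ∘ fix23Equiv))
    (outerProd (sliceNorm (A ∘ fix34Equiv)) (sliceNorm (A ∘ fix14Equiv)))) ∘ plaquetteRegroup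

variable {A : ℕ × ℕ × ℕ × ℕ → ℝ}

lemma abs_contract2x2_le_plaquetteBound (hA : Summable fun p => A p ^ 2)
    (q : (ℕ × ℕ) × (ℕ × ℕ) × (ℕ × ℕ) × (ℕ × ℕ)) :
    |contract2x2 A q| ≤ plaquetteBound A q := by
  have hslice (e : (ℕ × ℕ) × (ℕ × ℕ) ≃ ℕ × ℕ × ℕ × ℕ) (x : ℕ × ℕ) :
      Summable fun y => A (e (x, y)) ^ 2 :=
    ((e.summable_iff (f := fun p => A p ^ 2)).2 hA).prod_factor x
  have h := abs_tsum_plaquette_le (X := fun a d => A (q.1.1, q.2.1.1, a, d))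
    (Y := fun a c => A (a, q.2.1.2, q.2.2.1.1, c)) (Z := fun b c => A (b, c, q.2.2.1.2, q.2.2.2.1))
    (W := fun b d => A (q.1.2, b, d, q.2.2.2.2)) (hslice fix12Equiv (q.1.1, q.2.1.1))
    (hslice fix23Equiv (q.2.1.2, q.2.2.1.1)) (hslice fix34Equiv (q.2.2.1.2, q.2.2.2.1))
    (hslice fix14Equiv (q.1.2, q.2.2.2.2))
  rw [mul_assoc, mul_assoc] at h
  exact h

lemma summable_sq_plaquetteBound (hA : Summable fun p => A p ^ 2) :
    Summable fun q => plaquetteBound A q ^ 2 :=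
  (summable_sq_outerProd (summable_sq_sliceNorm_comp hA _) <|
    summable_sq_outerProd (summable_sq_sliceNorm_comp hA _) <|
      summable_sq_outerProd (summable_sq_sliceNorm_comp hA _)
        (summable_sq_sliceNorm_comp hA _)).comp_injective plaquetteRegroup.injective

lemma hsNorm_plaquetteBound (hA : Summable fun p => A p ^ 2) :
    hsNorm (plaquetteBound A) = hsNorm A ^ 4 := by
  have hslice (e : (ℕ × ℕ) × (ℕ × ℕ) ≃ ℕ × ℕ × ℕ × ℕ) := summable_sq_sliceNorm_comp hA e
  rw [plaquetteBound, hsNorm_comp_equiv,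
    hsNorm_outerProd (hslice _)
      (summable_sq_outerProd (hslice _) (summable_sq_outerProd (hslice _) (hslice _))),
    hsNorm_outerProd (hslice _) (summable_sq_outerProd (hslice _) (hslice _)),
    hsNorm_outerProd (hslice _) (hslice _), hsNorm_sliceNorm_comp hA, hsNorm_sliceNorm_comp hA,
    hsNorm_sliceNorm_comp hA, hsNorm_sliceNorm_comp hA]
  ring

end Contract2x2

/-- If `A` has finite Hilbert-Schmidt norm, then the tensor `T` obtained by contracting four
copies of `A` in a 2×2 plaquette satisfies `‖T‖ ≤ ‖A‖⁴`. -/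
theorem stmt1 (A : ℕ × ℕ × ℕ × ℕ → ℝ) (hA : Summable fun p => (A p) ^ 2) :
    hsNorm (contract2x2 A) ≤ (hsNorm A) ^ 4 :=
  calc hsNorm (contract2x2 A) ≤ hsNorm (plaquetteBound A) :=
        hsNorm_le_of_abs_le (summable_sq_plaquetteBound hA) (abs_contract2x2_le_plaquetteBound hA)
    _ = hsNorm A ^ 4 := hsNorm_plaquetteBound hA
end

section
/- Let M : ℕ × ℕ → ℝ be a Hilbert-Schmidt matrix with M₀₀ = 1 and (∑_{(i,j)≠(0,0)} M_{ij}²)^{1/2} ≤ ε ≤ 1/4. Set l_x = M_{x0} and r_x = M_{0x} for x ≥ 1, l₀ = r₀ = 0, and B = |l⟩⟨e₀| − |e₀⟩⟨r|, G = exp(B). Then the conjugated matrix M̃ = G⁻¹ M G satisfies (∑_{x≥1} M̃_{0x}²)^{1/2} ≤ C ε² and (∑_{x≥1} M̃_{x0}²)^{1/2} ≤ C ε² for an absolute constant C. -/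
/-!
Write `M = P + E` with `P = |e₀⟩⟨e₀|` and `‖E‖ ≤ ‖E‖_HS ≤ ε`, so that `M e₀ = e₀ + l` and
`M l = E l = O(ε²)`. The generator satisfies `B e₀ = l` and `B l = -⟪r, l⟫ e₀`, and
`exp (±B) = 1 ± B + O(ε²)`. Hence, up to `O(ε²)`,
`G⁻¹ M G e₀ ≈ (1 - B) M (e₀ + l) ≈ (1 - B) (e₀ + l) = (1 + ⟪r, l⟫) e₀`:
the first column of `M̃` is a multiple of `e₀` up to `O(ε²)`. The first row is the first column
of `M̃† = exp (-B') M† exp B'`, where `B'` is the generator built from `M†`, so the same estimate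
applies.
-/

open NormedSpace

/-- `V = ℓ²(ℕ, ℝ)`. -/
noncomputable abbrev V : Type := lp (fun _ : ℕ => ℝ) 2

/-- The standard orthonormal basis vector `e_i` of `V`. -/
noncomputable def e (i : ℕ) : V := lp.single 2 i (1 : ℝ)

open InnerProductSpace ContinuousLinearMap
open scoped Nat InnerProduct RealInnerProductSpace

section Exp

variable {𝔸 : Type*} [NormedRing 𝔸] [NormedAlgebra ℝ 𝔸] [CompleteSpace 𝔸]

theorem norm_exp_sub_one_sub_le {x : 𝔸} (hx : ‖x‖ ≤ 1) : ‖exp x - 1 - x‖ ≤ ‖x‖ ^ 2 := by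
  have htail : HasSum (fun n => ((n + 2)! : ℝ)⁻¹ • x ^ (n + 2)) (exp x - 1 - x) := by
    simpa [Finset.sum_range_succ, sub_sub] using
      (hasSum_nat_add_iff' 2).mpr (exp_series_hasSum_exp' (𝕂 := ℝ) x)
  have hreal : HasSum (fun n => ‖x‖ ^ (n + 2) / (n + 2)!) (Real.exp ‖x‖ - 1 - ‖x‖) := by
    simpa [Finset.sum_range_succ, sub_sub, Real.exp_eq_exp_ℝ] using
      (hasSum_nat_add_iff' 2).mpr (expSeries_div_hasSum_exp (𝔸 := ℝ) ‖x‖)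
  calc ‖exp x - 1 - x‖ ≤ Real.exp ‖x‖ - 1 - ‖x‖ := htail.norm_le_of_bounded hreal fun n => by
        rw [norm_smul, norm_inv, RCLike.norm_natCast, inv_mul_eq_div]
        gcongr
        exact norm_pow_le' x (by omega)
    _ ≤ ‖x‖ ^ 2 := by
        simpa using (abs_le.mp (Real.abs_exp_sub_one_sub_id_le (x := ‖x‖) (by simpa using hx))).2

theorem norm_exp_le_two [NormOneClass 𝔸] {x : 𝔸} (hx : ‖x‖ ≤ 1 / 2) : ‖exp x‖ ≤ 2 :=
  calc ‖exp x‖ = ‖(exp x - 1 - x) + 1 + x‖ := by abel_nf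
    _ ≤ ‖x‖ ^ 2 + 1 + ‖x‖ := by
        grw [norm_add_le, norm_add_le, norm_one, norm_exp_sub_one_sub_le (by linarith)]
    _ ≤ 2 := by nlinarith [norm_nonneg x]

end Exp

section Conjugation

variable {E : Type*} [NormedAddCommGroup E] [NormedSpace ℝ E]

theorem exp_neg_comp_comp_exp_apply {B T : E →L[ℝ] E} {u l : E} {a : ℝ} (hTu : T u = u + l)
    (hBu : B u = l) (hBl : B l = -a • u) :
    (exp (-B) ∘L (T ∘L exp B)) u = (1 + a) • u +
      ((exp (-B) - 1 - -B) (u + l) + exp (-B) (T l + T ((exp B - 1 - B) u))) := by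
  have hexp : exp B u = u + l + (exp B - 1 - B) u := by simp [hBu]
  have hexp_neg : exp (-B) (u + l) = (1 + a) • u + (exp (-B) - 1 - -B) (u + l) := by
    simp only [sub_apply, neg_apply, one_apply_eq_self, map_add, hBu, hBl]
    module
  rw [comp_apply, comp_apply, hexp, map_add, map_add, map_add, hTu, map_add (exp (-B)) (u + l),
    hexp_neg, map_add (exp (-B)) (T l)]
  abel

theorem norm_exp_neg_comp_comp_exp_apply_sub_smul_le [CompleteSpace E] {B T : E →L[ℝ] E}
    {u l : E} {a ε : ℝ} (hu : ‖u‖ = 1) (hε : ε ≤ 1 / 4) (hTu : T u = u + l) (hBu : B u = l)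
    (hBl : B l = -a • u) (hl : ‖l‖ ≤ ε) (hTl : ‖T l‖ ≤ ε ^ 2) (hT : ‖T‖ ≤ 1 + ε)
    (hB : ‖B‖ ≤ 2 * ε) :
    ‖(exp (-B) ∘L (T ∘L exp B)) u - (1 + a) • u‖ ≤ 17 * ε ^ 2 := by
  have : Nontrivial E := nontrivial_of_ne u 0 (by rintro rfl; simp at hu)
  have hε0 : 0 ≤ ε := (norm_nonneg l).trans hl
  have hR : ‖exp B - 1 - B‖ ≤ 4 * ε ^ 2 := by
    grw [norm_exp_sub_one_sub_le (by linarith), hB]; ring_nf; rfl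
  have hS : ‖exp (-B) - 1 - -B‖ ≤ 4 * ε ^ 2 := by
    grw [norm_exp_sub_one_sub_le (by rw [norm_neg]; linarith), norm_neg, hB]; ring_nf; rfl
  have hexp_neg : ‖exp (-B)‖ ≤ 2 := norm_exp_le_two (by rw [norm_neg]; linarith)
  rw [exp_neg_comp_comp_exp_apply hTu hBu hBl, add_sub_cancel_left]
  calc _ ≤ ‖exp (-B) - 1 - -B‖ * (‖u‖ + ‖l‖) +
        ‖exp (-B)‖ * (‖T l‖ + ‖T‖ * (‖exp B - 1 - B‖ * ‖u‖)) := by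
        grw [norm_add_le, le_opNorm, norm_add_le u, le_opNorm, norm_add_le,
          le_opNorm T ((exp B - 1 - B) u), le_opNorm (exp B - 1 - B)]
    _ ≤ 4 * ε ^ 2 * (1 + ε) + 2 * (ε ^ 2 + (1 + ε) * (4 * ε ^ 2 * 1)) := by
        rw [hu]; gcongr
    _ ≤ 17 * ε ^ 2 := by nlinarith

end Conjugation

namespace HilbertBasis

variable {ι κ H K : Type*} [NormedAddCommGroup H] [InnerProductSpace ℝ H]
  [NormedAddCommGroup K] [InnerProductSpace ℝ K]

theorem hasSum_inner_sq (b : HilbertBasis ι ℝ H) (v : H) :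
    HasSum (fun i => ⟪b i, v⟫ ^ 2) (‖v‖ ^ 2) := by
  simpa [sq, real_inner_comm v, ← real_inner_self_eq_norm_sq] using b.hasSum_inner_mul_inner v v

theorem sqrt_tsum_inner_sq_ne_le (b : HilbertBasis ι ℝ H) (i₀ : ι) (v : H) (c : ℝ) :
    √(∑' i : {i // i ≠ i₀}, ⟪b i, v⟫ ^ 2) ≤ ‖v - c • b i₀‖ := by
  have hcoord : ∀ i : {i // i ≠ i₀}, ⟪b i, v⟫ = ⟪b i, v - c • b i₀⟫ := fun i => by
    rw [inner_sub_right, real_inner_smul_right, b.orthonormal.inner_eq_zero i.2, mul_zero,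
      sub_zero]
  rw [Real.sqrt_le_left (norm_nonneg _), tsum_congr fun i => by rw [hcoord i],
    ← (b.hasSum_inner_sq _).tsum_eq]
  exact (b.hasSum_inner_sq _).summable.tsum_subtype_le _ _ fun _ => sq_nonneg _

theorem opNorm_le_sqrt_of_hasSum_inner_sq [CompleteSpace H] [CompleteSpace K]
    (b : HilbertBasis ι ℝ H) (b' : HilbertBasis κ ℝ K) (T : H →L[ℝ] K) {s : ℝ}
    (hs : HasSum (fun p : κ × ι => ⟪b' p.1, T (b p.2)⟫ ^ 2) s) :
    ‖T‖ ≤ √s := by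
  have hrows : HasSum (fun k => ‖(T†) (b' k)‖ ^ 2) s := hs.prod_fiberwise fun k => by
    simpa [adjoint_inner_right, real_inner_comm] using b.hasSum_inner_sq ((T†) (b' k))
  refine T.opNorm_le_bound (Real.sqrt_nonneg s) fun v => ?_
  have hpt : ∀ k, ⟪b' k, T v⟫ ^ 2 ≤ ‖(T†) (b' k)‖ ^ 2 * ‖v‖ ^ 2 := fun k => by
    rw [← adjoint_inner_left, ← mul_pow]
    exact sq_le_sq' (abs_le.mp (abs_real_inner_le_norm _ _)).1 (real_inner_le_norm _ _)
  have hsq : ‖T v‖ ^ 2 ≤ (√s * ‖v‖) ^ 2 := by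
    rw [mul_pow, Real.sq_sqrt (hrows.nonneg fun _ => sq_nonneg _)]
    exact hasSum_le hpt (b'.hasSum_inner_sq (T v)) (hrows.mul_right _)
  exact le_of_sq_le_sq hsq (by positivity)

end HilbertBasis

section Gauge

variable {H : Type*} [NormedAddCommGroup H] [InnerProductSpace ℝ H]

/-- The paper's `B = |l⟩⟨u| - |u⟩⟨r|`. -/
noncomputable def gaugeGenerator (u l r : H) : H →L[ℝ] H := rankOne ℝ l u - rankOne ℝ u r

theorem gaugeGenerator_apply (u l r v : H) :
    gaugeGenerator u l r v = ⟪u, v⟫ • l - ⟪r, v⟫ • u :=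
  rfl

theorem norm_gaugeGenerator_le {u : H} (hu : ‖u‖ = 1) (l r : H) :
    ‖gaugeGenerator u l r‖ ≤ ‖l‖ + ‖r‖ := by
  grw [gaugeGenerator, norm_sub_le, norm_rankOne, norm_rankOne, hu, mul_one, one_mul]

variable [CompleteSpace H]

theorem adjoint_gaugeGenerator (u l r : H) :
    (gaugeGenerator u l r)† = -gaugeGenerator u r l := by
  simp [gaugeGenerator]

theorem adjoint_exp_neg_comp_comp_exp (B T : H →L[ℝ] H) :
    (exp (-B) ∘L (T ∘L exp B))† = exp (B†) ∘L (T† ∘L exp (-B†)) := by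
  simp only [← star_eq_adjoint, ← mul_def, star_mul, star_exp, star_neg, mul_assoc]

theorem norm_adjoint_sub_rankOne_self (T : H →L[ℝ] H) (u : H) :
    ‖T† - rankOne ℝ u u‖ = ‖T - rankOne ℝ u u‖ := by
  rw [← LinearIsometryEquiv.norm_map adjoint, map_sub, adjoint_adjoint, adjoint_rankOne]

theorem exists_norm_exp_conj_apply_sub_smul_le {u : H} (hu : ‖u‖ = 1) {T : H →L[ℝ] H} {ε : ℝ}
    (hε : ε ≤ 1 / 4) (hT : ‖T - rankOne ℝ u u‖ ≤ ε) (hTu : ⟪u, T u⟫ = 1) :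
    ∃ c : ℝ, ‖(exp (-gaugeGenerator u (T u - u) ((T†) u - u)) ∘L
      (T ∘L exp (gaugeGenerator u (T u - u) ((T†) u - u)))) u - c • u‖ ≤ 17 * ε ^ 2 := by
  set P := rankOne ℝ u u
  set l := T u - u
  set r := (T†) u - u
  have hε0 : 0 ≤ ε := (norm_nonneg _).trans hT
  have huu : ⟪u, u⟫ = 1 := by rw [real_inner_self_eq_norm_sq, hu, one_pow]
  have hPu : P u = u := by rw [rankOne_apply, huu, one_smul]
  have hl : ‖l‖ ≤ ε := by
    simpa [l, hPu, hu] using (T - P).le_of_opNorm_le hT u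
  have hr : ‖r‖ ≤ ε := by
    simpa [r, hPu, hu] using
      (T† - P).le_of_opNorm_le ((norm_adjoint_sub_rankOne_self T u).trans_le hT) u
  have hul : ⟪u, l⟫ = 0 := by rw [inner_sub_right, hTu, huu, sub_self]
  have hru : ⟪r, u⟫ = 0 := by rw [inner_sub_left, adjoint_inner_left, hTu, huu, sub_self]
  have hTl : ‖T l‖ ≤ ε ^ 2 := by
    have : T l = (T - P) l := by simp [P, hul]
    rw [this, sq]
    exact (T - P).le_opNorm l |>.trans (mul_le_mul hT hl (norm_nonneg _) hε0)
  have hTn : ‖T‖ ≤ 1 + ε := by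
    calc ‖T‖ = ‖P + (T - P)‖ := by rw [add_sub_cancel]
      _ ≤ 1 + ε := by grw [norm_add_le, norm_rankOne, hu, hT, one_mul]
  have hBu : gaugeGenerator u l r u = l := by
    rw [gaugeGenerator_apply, huu, hru, one_smul, zero_smul, sub_zero]
  have hBl : gaugeGenerator u l r l = -⟪r, l⟫ • u := by
    rw [gaugeGenerator_apply, hul, zero_smul, zero_sub, neg_smul]
  exact ⟨_, norm_exp_neg_comp_comp_exp_apply_sub_smul_le hu hε (by simp [l]) hBu hBl hl hTl hTn
    ((norm_gaugeGenerator_le hu l r).trans (by linarith))⟩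

theorem exists_norm_adjoint_exp_conj_apply_sub_smul_le {u : H} (hu : ‖u‖ = 1) {T : H →L[ℝ] H}
    {ε : ℝ} (hε : ε ≤ 1 / 4) (hT : ‖T - rankOne ℝ u u‖ ≤ ε) (hTu : ⟪u, T u⟫ = 1) :
    ∃ c : ℝ, ‖((exp (-gaugeGenerator u (T u - u) ((T†) u - u)) ∘L
      (T ∘L exp (gaugeGenerator u (T u - u) ((T†) u - u))))†) u - c • u‖ ≤ 17 * ε ^ 2 := by
  have hTu' : ⟪u, (T†) u⟫ = 1 := by rw [adjoint_inner_right, real_inner_comm, hTu]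
  have h := exists_norm_exp_conj_apply_sub_smul_le hu hε
    ((norm_adjoint_sub_rankOne_self T u).trans_le hT) hTu'
  rwa [adjoint_adjoint, ← neg_neg (gaugeGenerator u ((T†) u - u) (T u - u)),
    ← adjoint_gaugeGenerator, neg_neg, ← adjoint_exp_neg_comp_comp_exp] at h

end Gauge

theorem hilbertBasis_default_apply (i : ℕ) : (default : HilbertBasis ℕ ℝ V) i = e i :=
  (HilbertBasis.repr_symm_single _ i).symm

theorem norm_e (i : ℕ) : ‖e i‖ = 1 := by
  simpa [hilbertBasis_default_apply] using (default : HilbertBasis ℕ ℝ V).orthonormal.1 i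

theorem inner_e_left (i : ℕ) (v : V) : ⟪e i, v⟫ = v i := by
  simp [e, lp.inner_single_left]

theorem inner_e_e (i j : ℕ) : ⟪e i, e j⟫ = if i = j then 1 else 0 := by
  simpa [hilbertBasis_default_apply] using
    orthonormal_iff_ite.mp (default : HilbertBasis ℕ ℝ V).orthonormal i j

theorem eq_sub_e_zero {v w : V} (hw : w 0 = 1) (hv : ∀ x, v x = if x = 0 then 0 else w x) :
    v = w - e 0 := by
  ext x
  rw [hv, lp.coeFn_sub, Pi.sub_apply, ← inner_e_left x (e 0), inner_e_e]
  split_ifs with h <;> simp [h, hw]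

theorem hasSum_inner_sub_rankOne_sq {M : ℕ × ℕ → ℝ} {T : V →L[ℝ] V}
    (hM : Summable fun p : ℕ × ℕ => M p ^ 2) (hM00 : M (0, 0) = 1)
    (hT : ∀ i j : ℕ, ⟪e i, T (e j)⟫ = M (i, j)) :
    HasSum (fun p : ℕ × ℕ => ⟪e p.1, (T - rankOne ℝ (e 0) (e 0)) (e p.2)⟫ ^ 2)
      (∑' p : {p : ℕ × ℕ // p ≠ (0, 0)}, M p.1 ^ 2) := by
  have hentry : ∀ p : ℕ × ℕ, ⟪e p.1, (T - rankOne ℝ (e 0) (e 0)) (e p.2)⟫ =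
      if p = (0, 0) then 0 else M p := by
    rintro ⟨i, j⟩
    simp only [sub_apply, rankOne_apply, inner_sub_right, real_inner_smul_right, hT, inner_e_e]
    by_cases hi : i = 0 <;> by_cases hj : j = 0 <;> simp [hi, hj, hM00, eq_comm]
  simp only [hentry]
  rw [← hasSum_subtype_iff_of_support_subset (s := {p | p ≠ (0, 0)})]
  · have hoff : ∀ p : {p : ℕ × ℕ // p ≠ (0, 0)},
        (if p.1 = (0, 0) then 0 else M p) ^ 2 = M p ^ 2 := fun p => by rw [if_neg p.2]
    rw [Function.comp_def]
    simp_rw [hoff]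
    exact (hM.subtype _).hasSum
  · intro p hp
    by_contra h
    exact hp (by simp [not_not.mp h])

theorem opNorm_sub_rankOne_le_sqrt {M : ℕ × ℕ → ℝ} {T : V →L[ℝ] V}
    (hM : Summable fun p : ℕ × ℕ => M p ^ 2) (hM00 : M (0, 0) = 1)
    (hT : ∀ i j : ℕ, ⟪e i, T (e j)⟫ = M (i, j)) :
    ‖T - rankOne ℝ (e 0) (e 0)‖ ≤ √(∑' p : {p : ℕ × ℕ // p ≠ (0, 0)}, M p.1 ^ 2) :=
  HilbertBasis.opNorm_le_sqrt_of_hasSum_inner_sq (default : HilbertBasis ℕ ℝ V)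
    (default : HilbertBasis ℕ ℝ V) _ <| by
    simp only [hilbertBasis_default_apply]
    exact hasSum_inner_sub_rankOne_sq hM hM00 hT

theorem sqrt_tsum_inner_e_sq_ne_zero_le (v : V) (c : ℝ) :
    √(∑' x : {x : ℕ // x ≠ 0}, ⟪e x, v⟫ ^ 2) ≤ ‖v - c • e 0‖ := by
  simpa [hilbertBasis_default_apply] using
    (default : HilbertBasis ℕ ℝ V).sqrt_tsum_inner_sq_ne_le 0 v c

/-- Let `M` be a Hilbert-Schmidt matrix (identified with the bounded operator `Mop` on
`V = ℓ²(ℕ)`) with `M₀₀ = 1` and off-`(0,0)` Hilbert-Schmidt norm at most `ε ≤ 1/4`. With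
`l_x = M_{x0}`, `r_x = M_{0x}` (`x ≥ 1`), `B = |l⟩⟨e₀| − |e₀⟩⟨r|`, `G = exp B`, the
conjugated matrix `M̃ = G⁻¹ M G` satisfies `(∑_{x≥1} M̃₀ₓ²)^{1/2} ≤ C ε²` and
`(∑_{x≥1} M̃ₓ₀²)^{1/2} ≤ C ε²` for an absolute constant `C`. -/
theorem stmt9 : ∃ C : ℝ, 0 < C ∧
    ∀ (M : ℕ × ℕ → ℝ) (ε : ℝ) (Mop : V →L[ℝ] V) (l r : V),
      Summable (fun p : ℕ × ℕ => (M p) ^ 2) →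
      M (0, 0) = 1 →
      Real.sqrt (∑' p : {p : ℕ × ℕ // p ≠ (0, 0)}, (M p.1) ^ 2) ≤ ε →
      ε ≤ 1 / 4 →
      (∀ i j : ℕ, (inner ℝ (e i) (Mop (e j)) : ℝ) = M (i, j)) →
      (∀ x : ℕ, l x = if x = 0 then 0 else M (x, 0)) →
      (∀ x : ℕ, r x = if x = 0 then 0 else M (0, x)) →
      ∀ B Mt : V →L[ℝ] V,
        B = (innerSL ℝ (e 0)).smulRight l - (innerSL ℝ r).smulRight (e 0) →
        Mt = (exp (-B)).comp (Mop.comp (exp B)) →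
        Real.sqrt (∑' x : {x : ℕ // x ≠ 0}, (inner ℝ (e 0) (Mt (e x.1)) : ℝ) ^ 2) ≤ C * ε ^ 2 ∧
        Real.sqrt (∑' x : {x : ℕ // x ≠ 0}, (inner ℝ (e x.1) (Mt (e 0)) : ℝ) ^ 2) ≤ C * ε ^ 2 := by
  refine ⟨17, by norm_num, fun M ε Mop l r hMsum hM00 hsqrt hε hent hl hr B Mt hB hMt => ?_⟩
  have hE := (opNorm_sub_rankOne_le_sqrt hMsum hM00 hent).trans hsqrt
  have hTu : ⟪e 0, Mop (e 0)⟫ = 1 := (hent 0 0).trans hM00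
  have hl' : l = Mop (e 0) - e 0 := eq_sub_e_zero (by rwa [← inner_e_left]) fun x => by
    rw [hl, ← inner_e_left, hent]
  have hr' : r = (Mop†) (e 0) - e 0 := eq_sub_e_zero
    (by rwa [← inner_e_left, adjoint_inner_right, real_inner_comm]) fun x => by
      rw [hr, ← inner_e_left, adjoint_inner_right, real_inner_comm, hent]
  have hB' : B = gaugeGenerator (e 0) (Mop (e 0) - e 0) ((Mop†) (e 0) - e 0) := by
    rw [hB, ← hl', ← hr']; rfl
  subst hMt hB'
  obtain ⟨c, hc⟩ := exists_norm_exp_conj_apply_sub_smul_le (norm_e 0) hε hE hTu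
  obtain ⟨c', hc'⟩ := exists_norm_adjoint_exp_conj_apply_sub_smul_le (norm_e 0) hε hE hTu
  refine ⟨?_, (sqrt_tsum_inner_e_sq_ne_zero_le _ c).trans hc⟩
  simp_rw [← adjoint_inner_left, real_inner_comm]
  exact (sqrt_tsum_inner_e_sq_ne_zero_le _ c').trans hc'
end
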